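/- The derivatives of the Mallows–Riordan polynomials at θ = -1 satisfy J'_{n+1}(-1) = (n/2)·J_{n+1}(-1) = (n/2)·A_n for all n ≥ 2, and J'_{n+1}(-1) = 0 for n ∈ {0,1}. -/

import Mathlib

open Polynomial MeasureTheory

/-- Mallows–Riordan polynomials `J n`, via the Kreweras recursion
`J (n+2) = ∑_{i=0}^n C(n,i) (1+θ+⋯+θ^i) J (i+1) J (n+1-i)`, `J 1 = 1`. -/
noncomputable def MRJ : ℕ → Polynomial ℚ
  | 0 => 0
  | 1 => 1
  | n + 2 =>
      ∑ i ∈ (Finset.range (n + 1)).attach,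
        (n.choose i.1 : Polynomial ℚ) * (∑ j ∈ Finset.range (i.1 + 1), X ^ j) *
          MRJ (i.1 + 1) * MRJ (n + 1 - i.1)
  decreasing_by
  · have := Finset.mem_range.mp i.2; omega
  · omega

/-- Euler zigzag numbers, as the Taylor coefficients at `0` of `sec z + tan z`. -/
noncomputable def zigzag (n : ℕ) : ℝ :=
  iteratedDeriv n (fun z : ℝ => (1 + Real.sin z) / Real.cos z) 0

/-!
At `θ = -1` the weight `1 + θ + ⋯ + θ ^ i` of Kreweras' recursion is `1` or `0` as `i` is even or
odd, and its derivative is `-i / 2` or `(i + 1) / 2`. Hence `a n = J (n + 1) (-1)` and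
`d n = J' (n + 1) (-1)` obey recursions made of binomial convolutions, i.e. of products of
exponential generating functions. The function `g = sec + tan` satisfies `g' = sec * g`, where `sec`
is the even part of `g`: this is the recursion of `a`. The function `φ z = z * tan z * g z / 2`
satisfies `φ' = U * g + φₑ * g + sec * φ`, with `φₑ` the even part of `φ` and
`U z = (z * (sec z ^ 2 - sec z * tan z) + tan z) / 2` the generating function of the weighted `a`:
this is the recursion of `d`. So `a` and `d` are the Taylor coefficients of `g` and `φ` at `0`.
Finally `tan² = sec² - 1` gives `φ z = z * ((g z - z) / 2)'`, whence `d n = n / 2 * a n` for `n ≠ 1`.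
-/

open Polynomial Filter Topology Finset

section ParityIteratedDeriv

variable {𝕜 : Type*} [NontriviallyNormedField 𝕜] [CharZero 𝕜] {n : ℕ}

lemma Function.Even.iteratedDeriv_zero_of_odd {f : 𝕜 → 𝕜} (hf : f.Even) (hn : Odd n) :
    iteratedDeriv n f 0 = 0 := by
  have h := iteratedDeriv_comp_neg n f 0
  rw [show (fun x ↦ f (-x)) = f from funext hf, neg_zero, hn.neg_one_pow, neg_one_smul] at h
  exact CharZero.eq_neg_self_iff.mp h

lemma Function.Odd.iteratedDeriv_zero_of_even {f : 𝕜 → 𝕜} (hf : f.Odd) (hn : Even n) :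
    iteratedDeriv n f 0 = 0 := by
  have h := iteratedDeriv_comp_neg n f 0
  rw [show (fun x ↦ f (-x)) = fun x ↦ -f x from funext hf, iteratedDeriv_fun_neg, neg_zero,
    hn.neg_one_pow, one_smul] at h
  exact CharZero.eq_neg_self_iff.mp h.symm

variable {e o : 𝕜 → 𝕜}

lemma Function.Even.iteratedDeriv_zero_eq_ite (he : e.Even) (ho : o.Odd)
    (he' : ContDiffAt 𝕜 n e 0) (ho' : ContDiffAt 𝕜 n o 0) :
    iteratedDeriv n e 0 = if Even n then iteratedDeriv n (e + o) 0 else 0 := by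
  rw [iteratedDeriv_add he' ho']
  split_ifs with hn
  · rw [ho.iteratedDeriv_zero_of_even hn, add_zero]
  · exact he.iteratedDeriv_zero_of_odd (Nat.not_even_iff_odd.mp hn)

lemma Function.Odd.iteratedDeriv_zero_eq_ite (he : e.Even) (ho : o.Odd)
    (he' : ContDiffAt 𝕜 n e 0) (ho' : ContDiffAt 𝕜 n o 0) :
    iteratedDeriv n o 0 = if Even n then 0 else iteratedDeriv n (e + o) 0 := by
  rw [iteratedDeriv_add he' ho']
  split_ifs with hn
  · exact ho.iteratedDeriv_zero_of_even hn
  · rw [he.iteratedDeriv_zero_of_odd (Nat.not_even_iff_odd.mp hn), zero_add]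

end ParityIteratedDeriv

lemma iteratedDeriv_id_mul_zero {𝕜 : Type*} [NontriviallyNormedField 𝕜] {f f' : 𝕜 → 𝕜}
    {n : ℕ} (hf : ∀ᶠ z in 𝓝 0, HasDerivAt f (f' z) z) (hf' : ContDiffAt 𝕜 n f' 0) :
    iteratedDeriv n (fun z ↦ z * f' z) 0 = n * iteratedDeriv n f 0 := by
  rw [iteratedDeriv_fun_mul (f := fun z ↦ z) contDiffAt_id hf']
  rcases n with _ | n
  · simp
  · rw [sum_eq_single 1 (fun i _ hi ↦ by simp [iteratedDeriv_fun_id_zero, hi])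
      (fun h ↦ absurd (mem_range.mpr (by omega)) h)]
    have hderiv : deriv f =ᶠ[𝓝 0] f' := hf.mono fun z hz ↦ hz.deriv
    simp [iteratedDeriv_fun_id_zero, iteratedDeriv_succ', hderiv.iteratedDeriv_eq]

section BinomConv

variable {R S : Type*} [Semiring R] [Semiring S]

def binomConv (a b : ℕ → R) (n : ℕ) : R :=
  ∑ i ∈ range (n + 1), n.choose i * a i * b (n - i)

def evenPart (a : ℕ → R) (n : ℕ) : R := if Even n then a n else 0

lemma binomConv_congr {a a' b b' : ℕ → R} {n : ℕ} (ha : ∀ i ≤ n, a i = a' i)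
    (hb : ∀ i ≤ n, b i = b' i) : binomConv a b n = binomConv a' b' n :=
  sum_congr rfl fun i hi ↦ by
    rw [ha i (by simpa [Nat.lt_succ_iff] using hi), hb (n - i) (Nat.sub_le n i)]

lemma map_binomConv (φ : R →+* S) (a b : ℕ → R) (n : ℕ) :
    φ (binomConv a b n) = binomConv (fun i ↦ φ (a i)) (fun i ↦ φ (b i)) n := by
  simp [binomConv, map_sum]

lemma evenPart_congr_map (φ : R →+* S) {a : ℕ → S} {b : ℕ → R} {n : ℕ}
    (h : ∀ i ≤ n, a i = φ (b i)) : ∀ i ≤ n, evenPart a i = φ (evenPart b i) := fun i hi ↦ by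
  simp only [evenPart, h i hi, apply_ite φ, map_zero]

end BinomConv

lemma MRJ_one : MRJ 1 = 1 := by rw [MRJ]

lemma MRJ_add_two (n : ℕ) : MRJ (n + 2) = ∑ i ∈ range (n + 1),
    (n.choose i : ℚ[X]) * (∑ j ∈ range (i + 1), X ^ j) * MRJ (i + 1) * MRJ (n + 1 - i) := by
  rw [MRJ]
  exact sum_attach (range (n + 1)) fun i ↦
    (n.choose i : ℚ[X]) * (∑ j ∈ range (i + 1), X ^ j) * MRJ (i + 1) * MRJ (n + 1 - i)

lemma MRJ_two : MRJ 2 = 1 := by simp [MRJ_add_two 0, MRJ_one]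

lemma eval_neg_one_geom_sum {R : Type*} [Ring R] (i : ℕ) :
    (∑ j ∈ range (i + 1), (X : R[X]) ^ j).eval (-1) = if Even i then 1 else 0 := by
  rw [eval_finsetSum]
  simp only [eval_X_pow, neg_one_geom_sum, Nat.even_add_one, ite_not]

def geomSumDerivAtNegOne (i : ℕ) : ℚ := if Even i then -i / 2 else (i + 1) / 2

lemma eval_neg_one_derivative_geom_sum (i : ℕ) :
    (derivative (∑ j ∈ range (i + 1), (X : ℚ[X]) ^ j)).eval (-1) = geomSumDerivAtNegOne i := by
  -- differentiate `(X - 1) * (1 + X + ⋯ + X ^ i) = X ^ (i + 1) - 1` and evaluate at `-1`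
  have h := congrArg (fun p ↦ (derivative p).eval (-1)) (mul_geom_sum (X : ℚ[X]) (i + 1))
  simp only [derivative_mul, derivative_sub, derivative_X, derivative_one, derivative_X_pow,
    eval_add, eval_mul, eval_sub, eval_one, eval_X, eval_pow, eval_C, sub_zero, one_mul,
    eval_neg_one_geom_sum, Nat.add_sub_cancel] at h
  unfold geomSumDerivAtNegOne
  split_ifs at h ⊢ with hi
  · rw [hi.neg_one_pow] at h; push_cast at h; linarith
  · rw [(Nat.not_even_iff_odd.mp hi).neg_one_pow] at h; push_cast at h; linarith

noncomputable def mrjEvalNegOne (n : ℕ) : ℚ := (MRJ (n + 1)).eval (-1)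

noncomputable def mrjDerivEvalNegOne (n : ℕ) : ℚ := (derivative (MRJ (n + 1))).eval (-1)

lemma mrjEvalNegOne_zero : mrjEvalNegOne 0 = 1 := by simp [mrjEvalNegOne, MRJ_one]

lemma mrjDerivEvalNegOne_zero : mrjDerivEvalNegOne 0 = 0 := by simp [mrjDerivEvalNegOne, MRJ_one]

lemma mrjEvalNegOne_succ (n : ℕ) :
    mrjEvalNegOne (n + 1) = binomConv (evenPart mrjEvalNegOne) mrjEvalNegOne n := by
  rw [mrjEvalNegOne, MRJ_add_two, eval_finsetSum, binomConv]
  refine sum_congr rfl fun i hi ↦ ?_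
  rw [show n + 1 - i = n - i + 1 by have := mem_range.mp hi; omega]
  simp only [eval_mul, eval_natCast, eval_neg_one_geom_sum, evenPart, mrjEvalNegOne]
  split_ifs <;> ring

lemma mrjDerivEvalNegOne_succ (n : ℕ) :
    mrjDerivEvalNegOne (n + 1) =
      binomConv (fun i ↦ geomSumDerivAtNegOne i * mrjEvalNegOne i) mrjEvalNegOne n +
        binomConv (evenPart mrjDerivEvalNegOne) mrjEvalNegOne n +
        binomConv (evenPart mrjEvalNegOne) mrjDerivEvalNegOne n := by
  rw [mrjDerivEvalNegOne, MRJ_add_two, derivative_sum, eval_finsetSum, binomConv, binomConv,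
    binomConv, ← sum_add_distrib, ← sum_add_distrib]
  refine sum_congr rfl fun i hi ↦ ?_
  rw [show n + 1 - i = n - i + 1 by have := mem_range.mp hi; omega]
  simp only [derivative_mul, derivative_natCast, eval_add, eval_mul, eval_natCast, eval_zero,
    eval_neg_one_geom_sum, eval_neg_one_derivative_geom_sum, evenPart, mrjEvalNegOne,
    mrjDerivEvalNegOne]
  split_ifs <;> ring

namespace Real

noncomputable def sec (x : ℝ) : ℝ := (cos x)⁻¹

lemma sec_even : Function.Even sec := fun x ↦ by simp [sec]

lemma tan_odd : Function.Odd tan := tan_neg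

@[fun_prop]
lemma contDiffAt_sec {n : WithTop ℕ∞} {x : ℝ} (hx : cos x ≠ 0) : ContDiffAt ℝ n sec x := by
  unfold sec; fun_prop (disch := exact hx)

@[fun_prop]
lemma contDiffAt_tan_of_cos_ne_zero {n : WithTop ℕ∞} {x : ℝ} (hx : cos x ≠ 0) :
    ContDiffAt ℝ n tan x :=
  contDiffAt_tan.2 hx

lemma hasDerivAt_sec {x : ℝ} (hx : cos x ≠ 0) : HasDerivAt sec (sec x * tan x) x := by
  have h : HasDerivAt (fun y ↦ (cos y)⁻¹) (-(-sin x) / cos x ^ 2) x := (hasDerivAt_cos x).inv hx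
  exact h.congr_deriv (by simp only [sec, tan_eq_sin_div_cos]; field_simp)

lemma hasDerivAt_tan_sec {x : ℝ} (hx : cos x ≠ 0) : HasDerivAt tan (sec x ^ 2) x :=
  (hasDerivAt_tan hx).congr_deriv (by simp [sec])

lemma eventually_cos_ne_zero : ∀ᶠ z in 𝓝 (0 : ℝ), cos z ≠ 0 :=
  continuous_cos.continuousAt.eventually_ne (by simp)

end Real

open Real

lemma zigzag_eq_iteratedDeriv_sec_add_tan (n : ℕ) :
    zigzag n = iteratedDeriv n (fun z ↦ sec z + tan z) 0 := by
  unfold zigzag; congr 1; funext z; simp [sec, tan_eq_sin_div_cos, add_div]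

lemma iteratedDeriv_sec_zero (n : ℕ) : iteratedDeriv n sec 0 = evenPart zigzag n := by
  rw [evenPart, zigzag_eq_iteratedDeriv_sec_add_tan]
  exact sec_even.iteratedDeriv_zero_eq_ite tan_odd (by fun_prop (disch := simp))
    (by fun_prop (disch := simp))

lemma iteratedDeriv_tan_zero (n : ℕ) :
    iteratedDeriv n tan 0 = if Even n then 0 else zigzag n := by
  rw [zigzag_eq_iteratedDeriv_sec_add_tan]
  exact tan_odd.iteratedDeriv_zero_eq_ite sec_even (by fun_prop (disch := simp))
    (by fun_prop (disch := simp))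

lemma deriv_sec_add_tan :
    deriv (fun z ↦ sec z + tan z) =ᶠ[𝓝 0] fun z ↦ sec z * (sec z + tan z) := by
  filter_upwards [eventually_cos_ne_zero] with z hz
  rw [((hasDerivAt_sec hz).fun_add (hasDerivAt_tan_sec hz)).deriv]
  ring

lemma zigzag_succ (n : ℕ) : zigzag (n + 1) = binomConv (evenPart zigzag) zigzag n := by
  rw [zigzag_eq_iteratedDeriv_sec_add_tan, iteratedDeriv_succ', deriv_sec_add_tan.iteratedDeriv_eq,
    iteratedDeriv_fun_mul (by fun_prop (disch := simp)) (by fun_prop (disch := simp)), binomConv]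
  simp only [iteratedDeriv_sec_zero, ← zigzag_eq_iteratedDeriv_sec_add_tan]

noncomputable def mrjDerivEGF (z : ℝ) : ℝ := z * (tan z * (sec z + tan z) / 2)

noncomputable def weightedZigzagEGF (z : ℝ) : ℝ := (z * (sec z ^ 2 - sec z * tan z) + tan z) / 2

@[fun_prop]
lemma contDiffAt_mrjDerivEGF {n : WithTop ℕ∞} {x : ℝ} (hx : cos x ≠ 0) :
    ContDiffAt ℝ n mrjDerivEGF x := by
  unfold mrjDerivEGF; fun_prop (disch := exact hx)

@[fun_prop]
lemma contDiffAt_weightedZigzagEGF {n : WithTop ℕ∞} {x : ℝ} (hx : cos x ≠ 0) :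
    ContDiffAt ℝ n weightedZigzagEGF x := by
  unfold weightedZigzagEGF; fun_prop (disch := exact hx)

lemma iteratedDeriv_weightedZigzagEGF (n : ℕ) :
    iteratedDeriv n weightedZigzagEGF 0 = geomSumDerivAtNegOne n * zigzag n := by
  have hderiv : ∀ᶠ z in 𝓝 0, HasDerivAt (fun w ↦ tan w - sec w) (sec z ^ 2 - sec z * tan z) z :=
    eventually_cos_ne_zero.mono fun z hz ↦ (hasDerivAt_tan_sec hz).sub (hasDerivAt_sec hz)
  unfold weightedZigzagEGF
  rw [iteratedDeriv_div_const, iteratedDeriv_fun_add, iteratedDeriv_id_mul_zero hderiv,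
    iteratedDeriv_fun_sub, iteratedDeriv_tan_zero, iteratedDeriv_sec_zero, geomSumDerivAtNegOne,
    evenPart]
  · split_ifs <;> push_cast <;> ring
  all_goals fun_prop (disch := simp)

lemma iteratedDeriv_mrjDerivEGF_of_ne_one {n : ℕ} (hn : n ≠ 1) :
    iteratedDeriv n mrjDerivEGF 0 = n / 2 * zigzag n := by
  have hderiv : ∀ᶠ z in 𝓝 0, HasDerivAt (fun w ↦ (sec w + tan w - w) / 2)
      (tan z * (sec z + tan z) / 2) z := by
    filter_upwards [eventually_cos_ne_zero] with z hz
    refine ((((hasDerivAt_sec hz).add (hasDerivAt_tan_sec hz)).sub (hasDerivAt_id z)).div_const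
      2).congr_deriv ?_
    simp only [sec, tan_eq_sin_div_cos]
    field_simp
    linear_combination (-1) * sin_sq_add_cos_sq z
  unfold mrjDerivEGF
  rw [iteratedDeriv_id_mul_zero hderiv, iteratedDeriv_div_const, iteratedDeriv_fun_sub,
    ← zigzag_eq_iteratedDeriv_sec_add_tan, iteratedDeriv_fun_id_zero, if_neg hn]
  · ring
  all_goals fun_prop (disch := simp)

lemma iteratedDeriv_mrjDerivEGF_evenPart (n : ℕ) :
    iteratedDeriv n (fun z ↦ z * tan z * sec z / 2) 0 =
      evenPart (fun i ↦ iteratedDeriv i mrjDerivEGF 0) n := by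
  have hsplit : mrjDerivEGF = (fun z ↦ z * tan z * sec z / 2) + fun z ↦ z * tan z * tan z / 2 := by
    funext z; simp only [mrjDerivEGF, Pi.add_apply]; ring
  have heven : Function.Even fun z ↦ z * tan z * sec z / 2 := fun z ↦ by
    simp only [tan_odd z, sec_even z]; ring
  have hodd : Function.Odd fun z ↦ z * tan z * tan z / 2 := fun z ↦ by
    simp only [tan_odd z]; ring
  rw [evenPart, hsplit]
  exact heven.iteratedDeriv_zero_eq_ite hodd (by fun_prop (disch := simp))
    (by fun_prop (disch := simp))

lemma deriv_mrjDerivEGF : deriv mrjDerivEGF =ᶠ[𝓝 0] fun z ↦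
    weightedZigzagEGF z * (sec z + tan z) + z * tan z * sec z / 2 * (sec z + tan z) +
      sec z * mrjDerivEGF z := by
  filter_upwards [eventually_cos_ne_zero] with z hz
  have h : HasDerivAt mrjDerivEGF _ z := (hasDerivAt_id z).mul (((hasDerivAt_tan_sec hz).mul
    ((hasDerivAt_sec hz).add (hasDerivAt_tan_sec hz))).div_const 2)
  rw [h.deriv]
  simp only [weightedZigzagEGF, mrjDerivEGF, id, Pi.add_apply]
  ring

lemma iteratedDeriv_mrjDerivEGF_succ (n : ℕ) :
    iteratedDeriv (n + 1) mrjDerivEGF 0 =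
      binomConv (fun i ↦ (geomSumDerivAtNegOne i : ℝ) * zigzag i) zigzag n +
        binomConv (evenPart fun i ↦ iteratedDeriv i mrjDerivEGF 0) zigzag n +
        binomConv (evenPart zigzag) (fun i ↦ iteratedDeriv i mrjDerivEGF 0) n := by
  rw [iteratedDeriv_succ', deriv_mrjDerivEGF.iteratedDeriv_eq, iteratedDeriv_fun_add,
    iteratedDeriv_fun_add, iteratedDeriv_fun_mul, iteratedDeriv_fun_mul, iteratedDeriv_fun_mul]
  · simp only [binomConv, iteratedDeriv_weightedZigzagEGF, iteratedDeriv_mrjDerivEGF_evenPart,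
      iteratedDeriv_sec_zero, ← zigzag_eq_iteratedDeriv_sec_add_tan]
  all_goals fun_prop (disch := simp)

lemma zigzag_eq_mrjEvalNegOne (n : ℕ) : zigzag n = mrjEvalNegOne n := by
  induction n using Nat.strong_induction_on with
  | _ n ih =>
    rcases n with _ | n
    · simp [zigzag, mrjEvalNegOne_zero]
    · have hE : ∀ i ≤ n, zigzag i = Rat.castHom ℝ (mrjEvalNegOne i) := fun i hi ↦ ih i (by omega)
      rw [zigzag_succ, mrjEvalNegOne_succ, ← Rat.coe_castHom, map_binomConv]
      exact binomConv_congr (evenPart_congr_map _ hE) hE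

lemma iteratedDeriv_mrjDerivEGF_eq_mrjDerivEvalNegOne (n : ℕ) :
    iteratedDeriv n mrjDerivEGF 0 = mrjDerivEvalNegOne n := by
  induction n using Nat.strong_induction_on with
  | _ n ih =>
    rcases n with _ | n
    · simp [mrjDerivEGF, mrjDerivEvalNegOne_zero]
    · have hD : ∀ i ≤ n, iteratedDeriv i mrjDerivEGF 0 = Rat.castHom ℝ (mrjDerivEvalNegOne i) :=
        fun i hi ↦ ih i (by omega)
      have hE : ∀ i ≤ n, zigzag i = Rat.castHom ℝ (mrjEvalNegOne i) :=
        fun i _ ↦ zigzag_eq_mrjEvalNegOne i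
      rw [iteratedDeriv_mrjDerivEGF_succ, mrjDerivEvalNegOne_succ, ← Rat.coe_castHom, map_add,
        map_add, map_binomConv, map_binomConv, map_binomConv]
      refine congrArg₂ (· + ·) (congrArg₂ (· + ·) ?_ ?_) ?_
      · exact binomConv_congr (fun i hi ↦ by simp [hE i hi]) hE
      · exact binomConv_congr (evenPart_congr_map _ hD) hE
      · exact binomConv_congr (evenPart_congr_map _ hE) hD

theorem MRJ_derivative_at_neg_one :
    (∀ n : ℕ, 2 ≤ n →
      (Polynomial.derivative (MRJ (n + 1))).eval (-1)
          = (n : ℚ) / 2 * (MRJ (n + 1)).eval (-1) ∧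
      (((Polynomial.derivative (MRJ (n + 1))).eval (-1) : ℚ) : ℝ)
          = (n : ℝ) / 2 * zigzag n) ∧
    (Polynomial.derivative (MRJ 1)).eval (-1) = 0 ∧
    (Polynomial.derivative (MRJ 2)).eval (-1) = 0 := by
  refine ⟨fun n hn ↦ ?_, by simp [MRJ_one], by simp [MRJ_two]⟩
  have hD : (mrjDerivEvalNegOne n : ℝ) = n / 2 * zigzag n := by
    rw [← iteratedDeriv_mrjDerivEGF_eq_mrjDerivEvalNegOne,
      iteratedDeriv_mrjDerivEGF_of_ne_one (by omega)]
  refine ⟨?_, hD⟩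
  have hDE : (mrjDerivEvalNegOne n : ℝ) = ((n / 2 * mrjEvalNegOne n : ℚ) : ℝ) := by
    rw [hD, zigzag_eq_mrjEvalNegOne]; push_cast; ring
  exact_mod_cast hDE
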